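/- arXiv:2410.00303 — 5 statements merged into one kernel-verified Lean document; each statement's English description precedes it below -/
import Mathlib

section
/- Let $a_1,\ldots,a_n$ be positive integers and let $Y_1,\ldots,Y_n$ be i.i.d. random variables with $\mathbb{P}(Y_k=1)=\mathbb{P}(Y_k=-1)=1/2$. Then for every integer $x$, $\mathbb{P}\left(\sum_{k=1}^n a_k Y_k = x\right) \leq 1/\sqrt{n}$. -/
/-!
Erdős's argument for the Littlewood–Offord problem. Almost surely `(Y k ω)ₖ` is the sign vector
`ε ∈ {±1}ⁿ` whose `+1` coordinates form some set `A`, and each such event has probability `2⁻ⁿ`.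
Because the weights are positive, `∑ aₖ εₖ = 2 ∑_{k ∈ A} aₖ - ∑ aₖ` strictly increases along
strict inclusion of `A`, so the sets `A` hitting the value `x` form an antichain, and Sperner's
theorem bounds their number by `C(n, ⌊n/2⌋)`. Finally `C(n, ⌊n/2⌋) ≤ 2ⁿ / √n`, which follows
from `(3m + 1) C(2m, m)² ≤ 16ᵐ`, proved by induction on `m`.
-/

open MeasureTheory ProbabilityTheory Finset

namespace Nat

theorem three_mul_add_one_mul_centralBinom_sq_le (m : ℕ) :
    (3 * m + 1) * centralBinom m ^ 2 ≤ 16 ^ m := by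
  induction m with
  | zero => simp
  | succ m ih =>
    refine Nat.le_of_mul_le_mul_left ?_ (by positivity : 0 < (m + 1) ^ 2)
    calc (m + 1) ^ 2 * ((3 * (m + 1) + 1) * centralBinom (m + 1) ^ 2)
        = (3 * m + 4) * ((m + 1) * centralBinom (m + 1)) ^ 2 := by ring
      _ = (3 * m + 4) * 4 * (2 * m + 1) ^ 2 * centralBinom m ^ 2 := by
          rw [succ_mul_centralBinom_succ]; ring
      _ ≤ 16 * (3 * m + 1) * (m + 1) ^ 2 * centralBinom m ^ 2 :=
          Nat.mul_le_mul_right _ (by nlinarith)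
      _ = (m + 1) ^ 2 * 16 * ((3 * m + 1) * centralBinom m ^ 2) := by ring
      _ ≤ (m + 1) ^ 2 * 16 * 16 ^ m := Nat.mul_le_mul_left _ ih
      _ = (m + 1) ^ 2 * 16 ^ (m + 1) := by ring

theorem centralBinom_succ_eq_two_mul_choose (m : ℕ) :
    centralBinom (m + 1) = 2 * (2 * m + 1).choose m := by
  rw [centralBinom_eq_two_mul_choose, show 2 * (m + 1) = 2 * m + 1 + 1 by ring,
    choose_succ_succ, choose_symm_half]
  ring

theorem mul_choose_half_sq_le_four_pow (n : ℕ) : n * n.choose (n / 2) ^ 2 ≤ 4 ^ n := by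
  obtain ⟨m, rfl | rfl⟩ := even_or_odd' n
  · rw [show 2 * m / 2 = m by omega, ← centralBinom_eq_two_mul_choose, pow_mul]
    calc 2 * m * centralBinom m ^ 2 ≤ (3 * m + 1) * centralBinom m ^ 2 := by gcongr; omega
      _ ≤ (4 ^ 2) ^ m := three_mul_add_one_mul_centralBinom_sq_le m
  · rw [show (2 * m + 1) / 2 = m by omega]
    refine Nat.le_of_mul_le_mul_left ?_ (by norm_num : 0 < 4)
    calc 4 * ((2 * m + 1) * (2 * m + 1).choose m ^ 2)
        = (2 * m + 1) * centralBinom (m + 1) ^ 2 := by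
          rw [centralBinom_succ_eq_two_mul_choose]; ring
      _ ≤ (3 * (m + 1) + 1) * centralBinom (m + 1) ^ 2 := by gcongr <;> omega
      _ ≤ 16 ^ (m + 1) := three_mul_add_one_mul_centralBinom_sq_le (m + 1)
      _ = 4 * 4 ^ (2 * m + 1) := by rw [pow_succ, pow_succ, pow_mul]; norm_num; ring

end Nat

theorem choose_half_div_two_pow_le_inv_sqrt {n : ℕ} (hn : 0 < n) :
    (n.choose (n / 2) : ℝ) / 2 ^ n ≤ 1 / √n := by
  rw [one_div, ← Real.sqrt_inv, Real.le_sqrt (by positivity) (by positivity), div_pow,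
    ← pow_mul, mul_comm, pow_mul, div_le_iff₀ (by positivity), ← div_eq_inv_mul,
    le_div_iff₀ (by positivity)]
  norm_num
  rw [mul_comm]
  exact_mod_cast Nat.mul_choose_half_sq_le_four_pow n

section SignVector

variable {ι R : Type*} [Fintype ι] [DecidableEq ι]

def signVector [One R] [Neg R] (A : Finset ι) (k : ι) : R := if k ∈ A then 1 else -1

theorem sum_mul_signVector [CommRing R] (a : ι → R) (A : Finset ι) :
    ∑ k, a k * signVector A k = 2 * ∑ k ∈ A, a k - ∑ k, a k := by
  rw [← univ_inter A, ← sum_ite_mem, mul_sum, ← sum_sub_distrib]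
  refine sum_congr rfl fun k _ => ?_
  simp only [signVector, mem_inter, mem_univ, true_and]
  split_ifs <;> ring

variable [CommRing R] [LinearOrder R] [IsStrictOrderedRing R]

theorem isAntichain_setOf_sum_mul_signVector_eq {a : ι → R} (ha : ∀ k, 0 < a k) (x : R) :
    IsAntichain (· ⊆ ·) {A : Finset ι | ∑ k, a k * signVector A k = x} := by
  intro A (hA : _ = x) B (hB : _ = x) hne hAB
  obtain ⟨k, hkB, hkA⟩ := exists_of_ssubset (lt_of_le_of_ne hAB hne)
  have : ∑ k ∈ A, a k < ∑ k ∈ B, a k :=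
    sum_lt_sum_of_subset hAB hkB hkA (ha k) fun j _ _ => (ha j).le
  rw [sum_mul_signVector] at hA hB
  linarith

theorem card_filter_sum_mul_signVector_eq_le {a : ι → R} (ha : ∀ k, 0 < a k) (x : R) :
    #{A : Finset ι | ∑ k, a k * signVector A k = x} ≤
      (Fintype.card ι).choose (Fintype.card ι / 2) :=
  IsAntichain.sperner (by simpa using isAntichain_setOf_sum_mul_signVector_eq ha x)

end SignVector

section Rademacher

variable {Ω ι : Type*} {mΩ : MeasurableSpace Ω} {μ : Measure Ω}

theorem ae_eq_one_or_eq_neg_one [IsProbabilityMeasure μ] {Z : Ω → ℤ} (hZ : Measurable Z)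
    (hplus : μ {ω | Z ω = 1} = 1 / 2) (hminus : μ {ω | Z ω = -1} = 1 / 2) :
    ∀ᵐ ω ∂μ, Z ω = 1 ∨ Z ω = -1 := by
  have hdisj : Disjoint {ω | Z ω = 1} {ω | Z ω = -1} :=
    Set.disjoint_left.2 fun ω (h1 : Z ω = 1) (h2 : Z ω = -1) => by omega
  have hmeas : MeasurableSet {ω | Z ω = 1 ∨ Z ω = -1} :=
    (hZ (measurableSet_singleton _)).union (hZ (measurableSet_singleton _))
  rw [ae_iff_measure_eq hmeas.nullMeasurableSet, Set.ofPred_or,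
    measure_union hdisj (hZ (measurableSet_singleton _)), hplus, hminus, ENNReal.add_halves,
    measure_univ]

variable [Fintype ι] [DecidableEq ι] {Y : ι → Ω → ℤ}

theorem measure_iInter_preimage_signVector (hindep : iIndepFun Y μ)
    (hplus : ∀ k, μ {ω | Y k ω = 1} = 1 / 2) (hminus : ∀ k, μ {ω | Y k ω = -1} = 1 / 2)
    (A : Finset ι) :
    μ (⋂ k, Y k ⁻¹' {signVector A k}) = 2⁻¹ ^ Fintype.card ι := by
  have hfactor : ∀ k, μ (Y k ⁻¹' {signVector A k}) = 2⁻¹ := fun k => by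
    rw [← one_div]
    unfold signVector
    split_ifs
    exacts [hplus k, hminus k]
  have := hindep.measure_inter_preimage_eq_mul univ (sets := fun k => {signVector A k})
    fun _ _ => measurableSet_singleton _
  simpa [hfactor] using this

theorem measure_sum_mul_eq_le_card_mul [IsProbabilityMeasure μ] (hmeas : ∀ k, Measurable (Y k))
    (hindep : iIndepFun Y μ)
    (hplus : ∀ k, μ {ω | Y k ω = 1} = 1 / 2) (hminus : ∀ k, μ {ω | Y k ω = -1} = 1 / 2)
    (a : ι → ℤ) (x : ℤ) :
    μ {ω | ∑ k, a k * Y k ω = x} ≤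
      #{A : Finset ι | ∑ k, a k * signVector A k = x} * 2⁻¹ ^ Fintype.card ι := by
  have hsign : ∀ᵐ ω ∂μ, ∀ k, Y k ω = signVector {j | Y j ω = 1} k := by
    filter_upwards [ae_all_iff.2 fun k => ae_eq_one_or_eq_neg_one (hmeas k) (hplus k) (hminus k)]
      with ω hω k
    rcases hω k with h | h <;> simp [signVector, h]
  calc μ {ω | ∑ k, a k * Y k ω = x}
      ≤ μ (⋃ A ∈ ({A | ∑ k, a k * signVector A k = x} : Finset (Finset ι)),
          ⋂ k, Y k ⁻¹' {signVector A k}) := by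
        exact measure_mono_ae <| hsign.mono fun ω hω (hx : _ = x) =>
          Set.mem_iUnion₂.2 ⟨_, by simpa [← hω] using hx, Set.mem_iInter.2 hω⟩
    _ ≤ _ := measure_biUnion_finset_le _ _
    _ = _ := by
        simp only [measure_iInter_preimage_signVector hindep hplus hminus, sum_const, nsmul_eq_mul]

end Rademacher

/-- Lemma 2.1 (2.3): If `a₁,…,aₙ` are positive integers and `Y₁,…,Yₙ` are i.i.d.
Rademacher random variables, then `ℙ(∑ aₖ Yₖ = x) ≤ 1/√n` for every integer `x`. -/
theorem rademacher_weighted_sum_point_mass_le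
    {Ω : Type*} [MeasureSpace Ω] [IsProbabilityMeasure (ℙ : Measure Ω)]
    {n : ℕ} (hn : 0 < n) (a : Fin n → ℤ) (ha : ∀ k, 0 < a k)
    (Y : Fin n → Ω → ℤ) (hmeas : ∀ k, Measurable (Y k))
    (hindep : iIndepFun Y ℙ)
    (hplus : ∀ k, ℙ {ω | Y k ω = 1} = 1/2)
    (hminus : ∀ k, ℙ {ω | Y k ω = -1} = 1/2)
    (x : ℤ) :
    ℙ {ω | ∑ k, a k * Y k ω = x} ≤ ENNReal.ofReal (1 / Real.sqrt n) := by
  calc ℙ {ω | ∑ k, a k * Y k ω = x}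
      ≤ #{A : Finset (Fin n) | ∑ k, a k * signVector A k = x} * 2⁻¹ ^ n := by
        simpa using measure_sum_mul_eq_le_card_mul hmeas hindep hplus hminus a x
    _ ≤ n.choose (n / 2) * 2⁻¹ ^ n := by
        gcongr
        simpa using card_filter_sum_mul_signVector_eq_le ha x
    _ = ENNReal.ofReal (n.choose (n / 2) / 2 ^ n) := by
        rw [ENNReal.ofReal_div_of_pos (by positivity)]
        simp [div_eq_mul_inv, ENNReal.inv_pow]
    _ ≤ ENNReal.ofReal (1 / Real.sqrt n) :=
        ENNReal.ofReal_le_ofReal (choose_half_div_two_pow_le_inv_sqrt hn)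
end

section
/- Let $a_1,\ldots,a_n$ be nonnegative integers with $\max_i a_i > 0$, and let $Y_1,\ldots,Y_n$ be i.i.d. Rademacher random variables. Then $\mathbb{P}\left(\sum_{k=1}^n a_k Y_k > 0\right) \geq 1/4$. -/
/-!
The law of `(Y₁, …, Yₙ)` is invariant under changing the signs of any set of coordinates.
Write `S = ∑ aₖ Yₖ`. Flipping all signs gives `ℙ(S > 0) = ℙ(S < 0)`. Flipping only a coordinate
`k₀` with `a_{k₀} ≠ 0` changes `S` by `2 a_{k₀} Y_{k₀} ≠ 0`, so it maps `{S = 0}` almost surely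
into its complement, whence `ℙ(S = 0) ≤ 1/2`. Therefore `2 ℙ(S > 0) = 1 - ℙ(S = 0) ≥ 1/2`.
-/

open MeasureTheory ProbabilityTheory Finset

section MeasurePreserving

variable {α : Type*} [MeasurableSpace α] {μ : Measure α} [IsProbabilityMeasure μ]

theorem two_mul_measure_le_one_of_measure_inter_preimage_eq_zero {f : α → α}
    (hf : MeasurePreserving f μ μ) {s : Set α} (hs : MeasurableSet s)
    (h : μ (s ∩ f ⁻¹' s) = 0) : 2 * μ s ≤ 1 :=
  calc 2 * μ s = μ s + μ (f ⁻¹' s) := by rw [two_mul, hf.measure_preimage hs.nullMeasurableSet]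
    _ = μ (s ∪ f ⁻¹' s) := by rw [← measure_union_add_inter s (hf.measurable hs), h, add_zero]
    _ ≤ 1 := prob_le_one

theorem quarter_le_measure_pos {c : α → ℤ} (hc : Measurable c) {f g : α → α}
    (hf : MeasurePreserving f μ μ) (hcf : ∀ x, c (f x) = -c x)
    (hg : MeasurePreserving g μ μ) (hg0 : μ ({x | c x = 0} ∩ g ⁻¹' {x | c x = 0}) = 0) :
    1 / 4 ≤ μ {x | 0 < c x} := by
  set p := μ {x | 0 < c x}
  set q := μ {x | c x = 0}
  have hmeas_neg : MeasurableSet {x | c x < 0} := hc measurableSet_Iio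
  have hmeas_zero : MeasurableSet {x | c x = 0} := hc (measurableSet_singleton 0)
  have hneg : μ {x | c x < 0} = p := by
    have : {x | 0 < c x} = f ⁻¹' {x | c x < 0} := by ext x; simp [hcf]
    rw [← hf.measure_preimage hmeas_neg.nullMeasurableSet, ← this]
  have hzero : 2 * q ≤ 1 :=
    two_mul_measure_le_one_of_measure_inter_preimage_eq_zero hg hmeas_zero hg0
  have htotal : p + p + q = 1 := by
    have hcover : {x | 0 < c x} ∪ {x | c x < 0} ∪ {x | c x = 0} = Set.univ := by
      ext x
      simp only [Set.mem_union, Set.mem_ofPred_eq, Set.mem_univ, iff_true]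
      omega
    nth_rw 2 [← hneg]
    rw [← measure_union ?_ hmeas_neg, ← measure_union ?_ hmeas_zero, hcover, measure_univ]
    all_goals
      refine Set.disjoint_left.2 fun x => ?_
      simp only [Set.mem_union, Set.mem_ofPred_eq]
      omega
  have h_one_le : 1 ≤ 4 * p := by
    rw [← ENNReal.add_le_add_iff_right ENNReal.one_ne_top]
    calc 1 + 1 = 2 * (p + p + q) := by rw [htotal]; norm_num
      _ = 4 * p + 2 * q := by ring
      _ ≤ 4 * p + 1 := by gcongr
  rwa [ENNReal.div_le_iff (by norm_num) (by norm_num), mul_comm]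

end MeasurePreserving

section SignFlip

variable {ι R : Type*} [DecidableEq ι]

def negOn [Neg R] (s : Finset ι) (x : ι → R) : ι → R := fun i => if i ∈ s then -x i else x i

theorem sum_mul_negOn_univ [Fintype ι] [CommRing R] (a x : ι → R) :
    ∑ i, a i * negOn univ x i = -∑ i, a i * x i := by
  simp [negOn, Finset.sum_neg_distrib]

theorem sum_mul_negOn_singleton [Fintype ι] [CommRing R] (a x : ι → R) (i₀ : ι) :
    ∑ i, a i * negOn {i₀} x i = ∑ i, a i * x i - 2 * a i₀ * x i₀ := by
  have : ∑ i, a i * x i - ∑ i, a i * negOn {i₀} x i = 2 * a i₀ * x i₀ := by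
    rw [← Finset.sum_sub_distrib,
      Finset.sum_eq_single i₀ (fun i _ hi => by simp [negOn, hi]) (by simp)]
    simp only [negOn, Finset.mem_singleton, if_true]
    ring
  rw [← this, sub_sub_cancel]

end SignFlip

section Rademacher

variable {Ω : Type*} [MeasurableSpace Ω] {P : Measure Ω} [IsProbabilityMeasure P] {X : Ω → ℤ}

theorem measure_eq_zero_of_ne_one_of_ne_neg_one (hX : Measurable X)
    (h1 : P {ω | X ω = 1} = 1 / 2) (h2 : P {ω | X ω = -1} = 1 / 2) {z : ℤ} (hz1 : z ≠ 1)
    (hz2 : z ≠ -1) : P {ω | X ω = z} = 0 := by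
  have hm1 : MeasurableSet {ω | X ω = 1} := hX (measurableSet_singleton _)
  have hm2 : MeasurableSet {ω | X ω = -1} := hX (measurableSet_singleton _)
  have hsupp : P ({ω | X ω = 1} ∪ {ω | X ω = -1}) = 1 := by
    rw [measure_union _ hm2, h1, h2, ENNReal.add_halves]
    exact Set.disjoint_left.2 fun ω (h : X ω = 1) (h' : X ω = -1) => by omega
  refine measure_mono_null (fun ω (h : X ω = z) => ?_)
    ((prob_compl_eq_zero_iff (hm1.union hm2)).2 hsupp)
  simp only [Set.mem_compl_iff, Set.mem_union, Set.mem_ofPred_eq]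
  omega

theorem measurePreserving_neg_map (hX : Measurable X)
    (h1 : P {ω | X ω = 1} = 1 / 2) (h2 : P {ω | X ω = -1} = 1 / 2) :
    MeasurePreserving Neg.neg (P.map X) (P.map X) := by
  refine ⟨measurable_neg, Measure.ext_of_singleton fun z => ?_⟩
  rw [Measure.map_apply measurable_neg (measurableSet_singleton z), Set.neg_preimage,
    Set.neg_singleton, Measure.map_apply hX (measurableSet_singleton _),
    Measure.map_apply hX (measurableSet_singleton _)]
  change P {ω | X ω = -z} = P {ω | X ω = z}
  by_cases hz1 : z = 1
  · simp [hz1, h1, h2]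
  by_cases hz2 : z = -1
  · simp [hz2, h1, h2]
  rw [measure_eq_zero_of_ne_one_of_ne_neg_one hX h1 h2 hz1 hz2,
    measure_eq_zero_of_ne_one_of_ne_neg_one hX h1 h2 (by omega) (by omega)]

theorem measurePreserving_negOn_map_pi {ι : Type*} [Fintype ι] [DecidableEq ι]
    {Y : ι → Ω → ℤ} (hY : ∀ i, Measurable (Y i)) (hindep : iIndepFun Y P)
    (h1 : ∀ i, P {ω | Y i ω = 1} = 1 / 2) (h2 : ∀ i, P {ω | Y i ω = -1} = 1 / 2)
    (s : Finset ι) :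
    MeasurePreserving (negOn s) (P.map fun ω i => Y i ω) (P.map fun ω i => Y i ω) := by
  have := fun i => Measure.isProbabilityMeasure_map (μ := P) (hY i).aemeasurable
  rw [hindep.map_fun_eq_pi_map fun i => (hY i).aemeasurable]
  refine measurePreserving_pi _ _ (f := fun i z => if i ∈ s then -z else z) fun i => ?_
  split_ifs
  · exact measurePreserving_neg_map (hY i) (h1 i) (h2 i)
  · exact MeasurePreserving.id _

end Rademacher

theorem rademacher_weighted_sum_pos_ge_quarter_general
    {Ω : Type*} [MeasureSpace Ω] [IsProbabilityMeasure (ℙ : Measure Ω)]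
    {n : ℕ} (a : Fin n → ℤ) (ha' : ∃ k, 0 < a k)
    (Y : Fin n → Ω → ℤ) (hmeas : ∀ k, Measurable (Y k))
    (hindep : iIndepFun Y ℙ)
    (hplus : ∀ k, ℙ {ω | Y k ω = 1} = 1/2)
    (hminus : ∀ k, ℙ {ω | Y k ω = -1} = 1/2) :
    (1/4 : ENNReal) ≤ ℙ {ω | 0 < ∑ k, a k * Y k ω} := by
  obtain ⟨k₀, hk₀⟩ := ha'
  have hYm : Measurable fun ω k => Y k ω := measurable_pi_lambda _ hmeas
  have := Measure.isProbabilityMeasure_map (μ := ℙ) hYm.aemeasurable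
  let c : (Fin n → ℤ) → ℤ := fun x => ∑ k, a k * x k
  have hc : Measurable c := measurable_of_countable c
  have hflip := measurePreserving_negOn_map_pi hmeas hindep hplus hminus
  change _ ≤ ℙ ((fun ω k => Y k ω) ⁻¹' {x | 0 < c x})
  rw [← Measure.map_apply hYm (measurableSet_lt measurable_const hc)]
  refine quarter_le_measure_pos hc (hflip univ) (sum_mul_negOn_univ a) (hflip {k₀}) ?_
  refine measure_mono_null (t := {x | x k₀ = 0})
    (fun x ⟨(hx : ∑ k, a k * x k = 0), (hgx : ∑ k, a k * negOn {k₀} x k = 0)⟩ => ?_) ?_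
  · rw [sum_mul_negOn_singleton, hx] at hgx
    have : a k₀ * x k₀ = 0 := by linarith
    exact (mul_eq_zero.1 this).resolve_left hk₀.ne'
  · rw [Measure.map_apply hYm (measurableSet_eq_fun (measurable_pi_apply k₀) measurable_const)]
    exact measure_eq_zero_of_ne_one_of_ne_neg_one (hmeas k₀) (hplus k₀) (hminus k₀)
      (by norm_num) (by norm_num)

/-- Lemma 2.1 (2.4): If `a₁,…,aₙ` are nonnegative integers, not all zero, and
`Y₁,…,Yₙ` are i.i.d. Rademacher random variables, then `ℙ(∑ aₖ Yₖ > 0) ≥ 1/4`. -/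
theorem rademacher_weighted_sum_pos_ge_quarter
    {Ω : Type*} [MeasureSpace Ω] [IsProbabilityMeasure (ℙ : Measure Ω)]
    {n : ℕ} (a : Fin n → ℤ) (ha : ∀ k, 0 ≤ a k) (ha' : ∃ k, 0 < a k)
    (Y : Fin n → Ω → ℤ) (hmeas : ∀ k, Measurable (Y k))
    (hindep : iIndepFun Y ℙ)
    (hplus : ∀ k, ℙ {ω | Y k ω = 1} = 1/2)
    (hminus : ∀ k, ℙ {ω | Y k ω = -1} = 1/2) :
    (1/4 : ENNReal) ≤ ℙ {ω | 0 < ∑ k, a k * Y k ω} :=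
  rademacher_weighted_sum_pos_ge_quarter_general a ha' Y hmeas hindep hplus hminus
end

section
/- Let $a_1,\ldots,a_n$ be nonnegative integers with $\max_i a_i > 0$, and let $Y_1,\ldots,Y_n$ be i.i.d. Rademacher random variables. Then $\mathbb{P}\left(\sum_{k=1}^n a_k Y_k \neq 0\right) \geq 1/2$. -/
/-!
Choose `k` with `a k ≠ 0` and write the sum as `T + a k * Y k` with `T` independent of `Y k`.
Every fibre of `a k * Y k` is empty or a fibre of `Y k`, hence has mass at most `1/2`: the fibre
`{Y k = 1}` has mass `1/2` and the others are disjoint from it.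
Therefore `ℙ(T + a k * Y k = 0) = ∑ₜ ℙ(T = t) ℙ(a k * Y k = -t) ≤ 1/2`.
-/

open MeasureTheory ProbabilityTheory

section

variable {Ω : Type*} {mΩ : MeasurableSpace Ω} {μ : Measure Ω}

lemma measure_preimage_singleton_le_half_of_eq_half [IsProbabilityMeasure μ] {β : Type*}
    [MeasurableSpace β] [MeasurableSingletonClass β] {Y : Ω → β} (hY : Measurable Y)
    {y₀ : β} (hy₀ : μ (Y ⁻¹' {y₀}) = 1 / 2) (y : β) : μ (Y ⁻¹' {y}) ≤ 1 / 2 := by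
  rcases eq_or_ne y y₀ with rfl | hne
  · exact hy₀.le
  · calc μ (Y ⁻¹' {y}) ≤ μ (Y ⁻¹' {y₀})ᶜ :=
          measure_mono fun ω hω h => hne ((Set.mem_singleton_iff.1 hω).symm.trans h)
      _ = 1 / 2 := by
          rw [prob_compl_eq_one_sub (hY (measurableSet_singleton y₀)), hy₀, one_div,
            ENNReal.one_sub_inv_two]

lemma measure_comp_preimage_singleton_le_of_injective {β γ : Type*} {Y : Ω → β} {g : β → γ}
    (hg : Function.Injective g) {p : ENNReal} (hp : ∀ y, μ (Y ⁻¹' {y}) ≤ p) (x : γ) :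
    μ ((g ∘ Y) ⁻¹' {x}) ≤ p := by
  by_cases hx : x ∈ Set.range g
  · obtain ⟨y, rfl⟩ := hx
    exact (measure_mono fun ω hω => hg hω).trans (hp y)
  · rw [Set.preimage_comp, Set.preimage_singleton_eq_empty.2 hx, Set.preimage_empty,
      measure_empty]
    exact zero_le

lemma ProbabilityTheory.IndepFun.measure_add_eq_le_of_preimage_singleton_le
    [IsProbabilityMeasure μ] {G : Type*} [AddGroup G] [Countable G] [MeasurableSpace G]
    [MeasurableSingletonClass G] {T X : Ω → G} (hT : Measurable T) (hTX : T ⟂ᵢ[μ] X)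
    {p : ENNReal} (hp : ∀ x, μ (X ⁻¹' {x}) ≤ p) (s : G) :
    μ {ω | T ω + X ω = s} ≤ p := by
  have hfibres : {ω | T ω + X ω = s} = ⋃ t, T ⁻¹' {t} ∩ X ⁻¹' {-t + s} := by
    ext ω
    simp [eq_neg_add_iff_add_eq]
  have htotal : ∑' t, μ (T ⁻¹' {t}) = 1 := by
    rw [← measure_iUnion (pairwise_disjoint_fiber T) fun t => hT (measurableSet_singleton t),
      ← Set.preimage_iUnion, Set.iUnion_of_singleton, Set.preimage_univ, measure_univ]
  calc μ {ω | T ω + X ω = s}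
      ≤ ∑' t, μ (T ⁻¹' {t} ∩ X ⁻¹' {-t + s}) := hfibres ▸ measure_iUnion_le _
    _ = ∑' t, μ (T ⁻¹' {t}) * μ (X ⁻¹' {-t + s}) := tsum_congr fun t =>
        hTX.measure_inter_preimage_eq_mul _ _ (measurableSet_singleton _)
          (measurableSet_singleton _)
    _ ≤ ∑' t, μ (T ⁻¹' {t}) * p := by gcongr with t; exact hp _
    _ = p := by rw [ENNReal.tsum_mul_right, htotal, one_mul]

end

theorem rademacher_weighted_sum_ne_zero_ge_half_general
    {Ω : Type*} [MeasureSpace Ω] [IsProbabilityMeasure (ℙ : Measure Ω)]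
    {n : ℕ} (a : Fin n → ℤ) (ha' : ∃ k, 0 < a k)
    (Y : Fin n → Ω → ℤ) (hmeas : ∀ k, Measurable (Y k))
    (hindep : iIndepFun Y ℙ)
    (hplus : ∀ k, ℙ {ω | Y k ω = 1} = 1/2) :
    (1/2 : ENNReal) ≤ ℙ {ω | ∑ k, a k * Y k ω ≠ 0} := by
  obtain ⟨k, hk⟩ := ha'
  set X : Fin n → Ω → ℤ := fun j => (a j * ·) ∘ Y j
  have hXmeas (j : Fin n) : Measurable (X j) := (hmeas j).const_mul (a j)
  have hXindep : (∑ j ∈ Finset.univ.erase k, X j) ⟂ᵢ X k :=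
    (hindep.comp _ fun j => measurable_const_mul (a j)).indepFun_finsetSum_of_notMem hXmeas
      (Finset.notMem_erase k _)
  have hXfibre (x : ℤ) : ℙ (X k ⁻¹' {x}) ≤ 1 / 2 :=
    measure_comp_preimage_singleton_le_of_injective (mul_right_injective₀ hk.ne')
      (measure_preimage_singleton_le_half_of_eq_half (hmeas k) (hplus k)) x
  have hzero : ℙ {ω | ∑ j, a j * Y j ω = 0} ≤ 1 / 2 := by
    simpa [X, Finset.sum_erase_add] using
      hXindep.measure_add_eq_le_of_preimage_singleton_le (by fun_prop) hXfibre 0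
  have hzero_meas : MeasurableSet {ω | ∑ j, a j * Y j ω = 0} :=
    measurableSet_eq_fun (by fun_prop) measurable_const
  calc (1 / 2 : ENNReal) = 1 - 1 / 2 := by rw [one_div, ENNReal.one_sub_inv_two]
    _ ≤ 1 - ℙ {ω | ∑ j, a j * Y j ω = 0} := tsub_le_tsub_left hzero 1
    _ = ℙ {ω | ∑ j, a j * Y j ω ≠ 0} := (prob_compl_eq_one_sub hzero_meas).symm

/-- Lemma 2.1 (2.5): If `a₁,…,aₙ` are nonnegative integers, not all zero, and
`Y₁,…,Yₙ` are i.i.d. Rademacher random variables, then `ℙ(∑ aₖ Yₖ ≠ 0) ≥ 1/2`. -/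
theorem rademacher_weighted_sum_ne_zero_ge_half
    {Ω : Type*} [MeasureSpace Ω] [IsProbabilityMeasure (ℙ : Measure Ω)]
    {n : ℕ} (a : Fin n → ℤ) (ha : ∀ k, 0 ≤ a k) (ha' : ∃ k, 0 < a k)
    (Y : Fin n → Ω → ℤ) (hmeas : ∀ k, Measurable (Y k))
    (hindep : iIndepFun Y ℙ)
    (hplus : ∀ k, ℙ {ω | Y k ω = 1} = 1/2)
    (hminus : ∀ k, ℙ {ω | Y k ω = -1} = 1/2) :
    (1/2 : ENNReal) ≤ ℙ {ω | ∑ k, a k * Y k ω ≠ 0} :=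
  rademacher_weighted_sum_ne_zero_ge_half_general a ha' Y hmeas hindep hplus
end

section
/- For all positive integers $k$, $\sqrt{2\pi k}\,(k/e)^k < k! < \sqrt{2\pi k}\,(k/e)^k \, e^{1/12}$. -/
open Real

open Stirling Filter Topology Nat in
private lemma step_pos (n : ℕ) :
    0 < log (stirlingSeq (n + 1)) - log (stirlingSeq (n + 2)) := by
  have h := log_stirlingSeq_diff_hasSum n
  have h0 : HasSum (fun _ : ℕ => (0:ℝ)) 0 := hasSum_zero
  refine hasSum_lt (i := 0) (fun m => by positivity) ?_ h0 h
  positivity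

open Stirling Filter Topology Nat in
private lemma step_lt (n : ℕ) :
    log (stirlingSeq (n + 1)) - log (stirlingSeq (n + 2)) <
      1 / (12 * ((n:ℝ) + 1) * ((n:ℝ) + 2)) := by
  set y : ℝ := ((1 : ℝ) / (2 * ↑(n + 1) + 1)) ^ 2 with hy
  have hypos : 0 < y := by positivity
  have hylt : y < 1 := by
    rw [hy, one_div, inv_pow]
    exact inv_lt_one_of_one_lt₀ (one_lt_pow₀ (lt_add_of_pos_left _ <| by positivity) two_ne_zero)
  have hg : HasSum (fun k : ℕ => (1/3 : ℝ) * y ^ (k + 1)) ((1/3) * y * (1 - y)⁻¹) := by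
    have heq : (fun k : ℕ => (1/3 : ℝ) * y ^ (k + 1)) = fun k => ((1/3 : ℝ) * y) * y ^ k := by
      funext k; rw [pow_succ]; ring
    rw [heq]
    exact (hasSum_geometric_of_lt_one hypos.le hylt).mul_left _
  have hf := log_stirlingSeq_diff_hasSum n
  have hle : ∀ k : ℕ, (1 : ℝ) / (2 * ↑(k + 1) + 1) * y ^ (k + 1) ≤ (1/3 : ℝ) * y ^ (k + 1) := by
    intro k
    have h13 : (1 : ℝ) / (2 * ((k:ℝ) + 1) + 1) ≤ 1/3 := by
      rw [div_le_div_iff₀ (by positivity) (by norm_num)]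
      nlinarith [Nat.cast_nonneg (α := ℝ) k]
    push_cast
    exact mul_le_mul_of_nonneg_right h13 (by positivity)
  have hlt := hasSum_lt (i := 1) hle (by
      push_cast
      nlinarith [pow_pos hypos 2]) hf hg
  have h1y : (0:ℝ) < 1 - y := by linarith
  have h1yne : (1 : ℝ) - y ≠ 0 := by linarith
  have hkey : (1/3 : ℝ) * y * (1 - y)⁻¹ = 1 / (12 * ((n:ℝ) + 1) * ((n:ℝ) + 2)) := by
    rw [hy] at h1yne ⊢
    have p0 : (2 * ((n:ℝ) + 1) + 1) ≠ 0 := by positivity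
    push_cast at h1yne ⊢
    rw [← div_eq_mul_inv, div_eq_div_iff h1yne (by positivity)]
    field_simp
    ring
  rw [hkey] at hlt
  exact hlt

open Stirling Filter Topology Nat in
private lemma sqrtpi_lt (n : ℕ) : Real.sqrt π < stirlingSeq (n + 1) := by
  have hge : Real.sqrt π ≤ stirlingSeq (n + 2) := by
    have htend : Tendsto (fun m : ℕ => stirlingSeq (m + (n + 2))) atTop (𝓝 (Real.sqrt π)) :=
      (tendsto_add_atTop_iff_nat (n+2)).2 tendsto_stirlingSeq_sqrt_pi
    refine le_of_tendsto htend (Eventually.of_forall fun m => ?_)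
    have := stirlingSeq'_antitone (show n + 1 ≤ m + n + 1 by omega)
    simpa [Function.comp, Nat.succ_eq_add_one, show m + n + 1 + 1 = m + (n + 2) by omega] using this
  have hlt : stirlingSeq (n + 2) < stirlingSeq (n + 1) := by
    have h := step_pos n
    have h1 := stirlingSeq'_pos n
    have h2 := stirlingSeq'_pos (n + 1)
    rw [sub_pos] at h
    exact (log_lt_log_iff (by simpa using h2) h1).1 (by simpa using h)
  exact hge.trans_lt hlt

open Stirling Filter Topology Nat in
private lemma log_telescope (n m : ℕ) :
    log (stirlingSeq (n + 1)) ≤ log (stirlingSeq (n + 1 + m)) +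
      (1/12) * (1 / ((n:ℝ) + 1) - 1 / ((n:ℝ) + 1 + m)) := by
  induction m with
  | zero => simp
  | succ m ih =>
    have hstep : log (stirlingSeq (n + 1 + m)) ≤ log (stirlingSeq (n + 1 + (m+1))) +
        (1/12) * (1 / ((n:ℝ) + 1 + m) - 1 / ((n:ℝ) + 1 + ((m:ℝ)+1))) := by
      have e1 : n + 1 + m = (n + m) + 1 := by omega
      have e2 : n + 1 + (m + 1) = (n + m) + 2 := by omega
      rw [e1, e2]
      have hs := step_lt (n + m)
      push_cast at hs
      have p1 : ((n:ℝ) + 1 + m) ≠ 0 := by positivity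
      have p2 : ((n:ℝ) + 1 + ((m:ℝ)+1)) ≠ 0 := by positivity
      have hb : (1:ℝ) / (12 * ((n:ℝ) + (m:ℝ) + 1) * ((n:ℝ) + (m:ℝ) + 2)) =
          (1/12) * (1 / ((n:ℝ) + 1 + m) - 1 / ((n:ℝ) + 1 + ((m:ℝ)+1))) := by
        field_simp
        ring
      linarith
    calc log (stirlingSeq (n + 1)) ≤ _ := ih
    _ ≤ _ := by push_cast at hstep ⊢; linarith

open Stirling Filter Topology Nat in
private lemma log_upper (n : ℕ) :
    log (stirlingSeq (n + 1)) ≤ Real.log (Real.sqrt π) + (1/12) * (1 / ((n:ℝ) + 1)) := by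
  have hπ : (0:ℝ) < Real.sqrt π := Real.sqrt_pos.2 Real.pi_pos
  have h1 : Tendsto (fun m : ℕ => stirlingSeq (n + 1 + m)) atTop (𝓝 (Real.sqrt π)) := by
    rw [show (fun m : ℕ => stirlingSeq (n + 1 + m)) = (fun m => stirlingSeq (m + (n+1))) by
      funext m; rw [Nat.add_comm]]
    exact (tendsto_add_atTop_iff_nat (n+1)).2 tendsto_stirlingSeq_sqrt_pi
  have h2 : Tendsto (fun m : ℕ => log (stirlingSeq (n + 1 + m))) atTop
      (𝓝 (Real.log (Real.sqrt π))) :=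
    (Real.continuousAt_log hπ.ne').tendsto.comp h1
  have h3 : Tendsto (fun m : ℕ => ((n:ℝ) + 1 + m)⁻¹) atTop (𝓝 0) :=
    tendsto_inv_atTop_zero.comp (tendsto_atTop_add_const_left _ _ tendsto_natCast_atTop_atTop)
  have htend : Tendsto (fun m : ℕ => log (stirlingSeq (n + 1 + m)) +
      (1/12) * (1 / ((n:ℝ) + 1) - 1 / ((n:ℝ) + 1 + m))) atTop
      (𝓝 (Real.log (Real.sqrt π) + (1/12) * (1 / ((n:ℝ) + 1) - 0))) := by
    simp only [one_div]
    exact h2.add ((tendsto_const_nhds.sub h3).const_mul _)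
  have := ge_of_tendsto htend (Eventually.of_forall fun m => log_telescope n m)
  simpa using this

open Stirling Filter Topology Nat in
private lemma stirling_upper (n : ℕ) :
    stirlingSeq (n + 1) < Real.sqrt π * Real.exp (1/12) := by
  have hπ : (0:ℝ) < Real.sqrt π := Real.sqrt_pos.2 Real.pi_pos
  have hpos := stirlingSeq'_pos n
  rw [← Real.exp_log hpos, ← Real.exp_log hπ, ← Real.exp_add]
  apply Real.exp_lt_exp.2
  have h1 : log (stirlingSeq (n + 1)) < log (stirlingSeq (n + 2)) +
      1 / (12 * ((n:ℝ) + 1) * ((n:ℝ) + 2)) := by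
    have := step_lt n; linarith
  have h2 := log_upper (n + 1)
  have key : 1 / (12 * ((n:ℝ) + 1) * ((n:ℝ) + 2)) + (1/12) * (1 / ((n:ℝ) + 1 + 1)) =
      (1/12) * (1 / ((n:ℝ) + 1)) := by
    have p1 : ((n:ℝ) + 1) ≠ 0 := by positivity
    have p2 : ((n:ℝ) + 2) ≠ 0 := by positivity
    field_simp
    ring
  have hle : (1/12 : ℝ) * (1 / ((n:ℝ) + 1)) ≤ 1/12 := by
    have : (1:ℝ) / ((n:ℝ) + 1) ≤ 1 := by
      rw [div_le_one (by positivity)]; linarith [Nat.cast_nonneg (α := ℝ) n]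
    linarith
  push_cast at h2
  linarith

/-- Robbins' form of Stirling's formula: for all positive integers `k`,
`√(2πk) (k/e)^k < k! < √(2πk) (k/e)^k e^(1/12)`. -/
theorem robbins_stirling (k : ℕ) (hk : 0 < k) :
    Real.sqrt (2 * π * k) * ((k : ℝ) / Real.exp 1) ^ k < (k.factorial : ℝ) ∧
      (k.factorial : ℝ) < Real.sqrt (2 * π * k) * ((k : ℝ) / Real.exp 1) ^ k * Real.exp (1/12) := by
  obtain ⟨n, rfl⟩ : ∃ n, k = n + 1 := ⟨k - 1, by omega⟩
  have hsq : Real.sqrt (2 * π * (n + 1 : ℕ)) =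
      Real.sqrt π * Real.sqrt (2 * (n + 1 : ℕ)) := by
    rw [← Real.sqrt_mul Real.pi_pos.le]
    congr 1
    push_cast; ring
  have hbase : (0:ℝ) < Real.sqrt (2 * ((n:ℝ) + 1)) * (((n:ℝ) + 1) / Real.exp 1) ^ (n + 1) := by
    positivity
  have hdef : Stirling.stirlingSeq (n + 1) = ((n+1).factorial : ℝ) /
      (Real.sqrt (2 * ((n:ℝ) + 1)) * (((n:ℝ) + 1) / Real.exp 1) ^ (n + 1)) := by
    rw [Stirling.stirlingSeq]
    push_cast
    ring_nf
  have hlow := sqrtpi_lt n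
  have hup := stirling_upper n
  rw [hdef, lt_div_iff₀ hbase] at hlow
  rw [hdef, div_lt_iff₀ hbase] at hup
  constructor
  · rw [hsq]
    push_cast
    push_cast at hlow
    linarith
  · rw [hsq]
    push_cast
    push_cast at hup
    nlinarith [Real.exp_pos (1/12 : ℝ), hbase]
end

section
/- Let $d \geq 3$ and let $Z$ be a $\mathbb{Z}^d$-valued random variable, never equal to $0$, whose distribution is invariant under all signed permutation matrices (coordinate permutations and sign flips). Then $\mathbb{P}(\langle Z, e_1 \rangle > 0 \text{ and } \langle Z, e_d \rangle \geq 0) \geq \frac{1}{4d}$. -/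
open MeasureTheory ProbabilityTheory

/-- Claim 3.5 (generalized): let `d ≥ 3` and let `Z` be a `ℤᵈ`-valued random variable which is
never `0` and whose law is invariant under all signed permutation matrices (i.e. under
`z ↦ (i ↦ ε i * z (σ i))` for every permutation `σ` and choice of signs `ε`).  Then
`ℙ(Z₁ > 0 and Z_d ≥ 0) ≥ 1/(4d)`. -/
theorem signed_perm_invariant_first_pos_last_nonneg
    {Ω : Type*} [MeasureSpace Ω] [IsProbabilityMeasure (ℙ : Measure Ω)]
    {d : ℕ} (hd : 3 ≤ d)
    (Z : Ω → Fin d → ℤ) (hmeas : Measurable Z)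
    (hZ : ∀ a, Z a ≠ 0)
    (hinv : ∀ (σ : Equiv.Perm (Fin d)) (ε : Fin d → ℤ), (∀ i, ε i = 1 ∨ ε i = -1) →
      Measure.map (fun a => fun i => ε i * Z a (σ i)) ℙ = Measure.map Z ℙ) :
    (1 : ENNReal) / (4 * d) ≤
      ℙ {a | 0 < Z a ⟨0, by omega⟩ ∧ 0 ≤ Z a ⟨d - 1, by omega⟩} := by
  set i0 : Fin d := ⟨0, by omega⟩ with hi0
  set ie : Fin d := ⟨d - 1, by omega⟩ with hie
  have hne : i0 ≠ ie := by
    simp only [hi0, hie, Fin.ne_iff_vne]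
    omega
  -- key invariance identity for preimages
  have key : ∀ (σ : Equiv.Perm (Fin d)) (ε : Fin d → ℤ), (∀ i, ε i = 1 ∨ ε i = -1) →
      ∀ S : Set (Fin d → ℤ),
      ℙ ((fun a => fun i => ε i * Z a (σ i)) ⁻¹' S) = ℙ (Z ⁻¹' S) := by
    intro σ ε hε S
    have hSm : MeasurableSet S := (Set.to_countable S).measurableSet
    have hm : Measurable (fun a => fun i => ε i * Z a (σ i)) :=
      measurable_pi_iff.mpr fun i => ((measurable_pi_apply (σ i)).comp hmeas).const_mul (ε i)
    rw [← Measure.map_apply hm hSm, ← Measure.map_apply hmeas hSm, hinv σ ε hε]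
  set p : ENNReal := ℙ {a | 0 < Z a i0 ∧ 0 ≤ Z a ie} with hp
  -- quadrant bound: for any signs e0 ee, ℙ(0 < e0 * Z i0 ∧ 0 ≤ ee * Z ie) = p
  have quad : ∀ e0 ee : ℤ, (e0 = 1 ∨ e0 = -1) → (ee = 1 ∨ ee = -1) →
      ℙ {a | 0 < e0 * Z a i0 ∧ 0 ≤ ee * Z a ie} = p := by
    intro e0 ee he0 hee
    set ε : Fin d → ℤ := fun i => if i = i0 then e0 else if i = ie then ee else 1 with hε
    have hεval : ∀ i, ε i = 1 ∨ ε i = -1 := by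
      intro i
      by_cases h1 : i = i0 <;> by_cases h2 : i = ie <;> simp [hε, h1, h2, he0, hee, hne.symm]
    have := key (Equiv.refl _) ε hεval {z | 0 < z i0 ∧ 0 ≤ z ie}
    have hset : ((fun a => fun i => ε i * Z a ((Equiv.refl (Fin d)) i)) ⁻¹'
        {z | 0 < z i0 ∧ 0 ≤ z ie}) = {a | 0 < e0 * Z a i0 ∧ 0 ≤ ee * Z a ie} := by
      ext a
      simp [hε, hne, hne.symm]
    rw [hset] at this
    exact this
  -- P(Z i0 ≠ 0) ≤ 4 p
  have cover : {a | Z a i0 ≠ 0} ⊆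
      {a | 0 < 1 * Z a i0 ∧ 0 ≤ 1 * Z a ie} ∪ {a | 0 < 1 * Z a i0 ∧ 0 ≤ (-1) * Z a ie}
      ∪ {a | 0 < (-1) * Z a i0 ∧ 0 ≤ 1 * Z a ie}
      ∪ {a | 0 < (-1) * Z a i0 ∧ 0 ≤ (-1) * Z a ie} := by
    intro a ha
    simp only [Set.mem_setOf_eq, Set.mem_union, one_mul, neg_mul, neg_one_mul] at *
    rcases lt_or_gt_of_ne ha with h | h
    · rcases le_or_gt 0 (Z a ie) with h2 | h2
      · exact Or.inl (Or.inr ⟨by omega, by omega⟩)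
      · exact Or.inr ⟨by omega, by omega⟩
    · rcases le_or_gt 0 (Z a ie) with h2 | h2
      · exact Or.inl (Or.inl (Or.inl ⟨h, h2⟩))
      · exact Or.inl (Or.inl (Or.inr ⟨h, by omega⟩))
  have hE4 : ℙ {a | Z a i0 ≠ 0} ≤ 4 * p := by
    calc ℙ {a | Z a i0 ≠ 0} ≤ _ := measure_mono cover
    _ ≤ ℙ {a | 0 < 1 * Z a i0 ∧ 0 ≤ 1 * Z a ie} + ℙ {a | 0 < 1 * Z a i0 ∧ 0 ≤ (-1) * Z a ie}
        + ℙ {a | 0 < (-1) * Z a i0 ∧ 0 ≤ 1 * Z a ie}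
        + ℙ {a | 0 < (-1) * Z a i0 ∧ 0 ≤ (-1) * Z a ie} := by
      refine le_trans (measure_union_le _ _) ?_
      refine add_le_add (le_trans (measure_union_le _ _) ?_) le_rfl
      exact add_le_add (measure_union_le _ _) le_rfl
    _ = p + p + p + p := by
      rw [quad 1 1 (Or.inl rfl) (Or.inl rfl), quad 1 (-1) (Or.inl rfl) (Or.inr rfl),
        quad (-1) 1 (Or.inr rfl) (Or.inl rfl), quad (-1) (-1) (Or.inr rfl) (Or.inr rfl)]
    _ = 4 * p := by ring
  -- all coordinates have equal probability of being nonzero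
  have eqcoord : ∀ i : Fin d, ℙ {a | Z a i ≠ 0} = ℙ {a | Z a i0 ≠ 0} := by
    intro i
    have := key (Equiv.swap i0 i) (fun _ => 1) (fun _ => Or.inl rfl) {z | z i0 ≠ 0}
    have hset : ((fun a => fun j => (1 : ℤ) * Z a (Equiv.swap i0 i j)) ⁻¹' {z | z i0 ≠ 0})
        = {a | Z a i ≠ 0} := by
      ext a
      simp [Equiv.swap_apply_left]
    rw [hset] at this
    exact this
  -- union over coordinates is everything
  have hunion : (⋃ i : Fin d, {a | Z a i ≠ 0}) = Set.univ := by
    ext a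
    simp only [Set.mem_iUnion, Set.mem_setOf_eq, Set.mem_univ, iff_true]
    by_contra h
    push_neg at h
    exact hZ a (funext fun i => h i)
  have hone : (1 : ENNReal) ≤ d * ℙ {a | Z a i0 ≠ 0} := by
    have h1 : (1 : ENNReal) = ℙ (⋃ i : Fin d, {a | Z a i ≠ 0}) := by
      rw [hunion, measure_univ]
    rw [h1]
    refine le_trans (measure_iUnion_fintype_le _ _) (le_of_eq ?_)
    calc (∑ i : Fin d, ℙ {a | Z a i ≠ 0}) = ∑ _i : Fin d, ℙ {a | Z a i0 ≠ 0} := by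
          exact Finset.sum_congr rfl fun i _ => eqcoord i
    _ = d * ℙ {a | Z a i0 ≠ 0} := by
          rw [Finset.sum_const, Finset.card_univ, Fintype.card_fin, nsmul_eq_mul]
  have hfinal : (1 : ENNReal) ≤ 4 * d * p := by
    calc (1 : ENNReal) ≤ d * ℙ {a | Z a i0 ≠ 0} := hone
    _ ≤ d * (4 * p) := mul_le_mul_right hE4 _
    _ = 4 * d * p := by ring
  rw [ENNReal.div_le_iff_le_mul]
  · calc (1 : ENNReal) ≤ 4 * d * p := hfinal
    _ = p * (4 * d) := by ring
  · left
    refine mul_ne_zero (by norm_num) ?_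
    simpa using (by omega : d ≠ 0)
  · left
    exact ENNReal.mul_ne_top (by norm_num) (ENNReal.natCast_ne_top d)
end
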